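/- (Theorem 2, pair ANOVA component) Let μ be a 2-additive capacity on N with Möbius transform m, and let f^Lo(z) = Σ_{i∈N} m(i) z_i + Σ_{{i,j} ⊆ N} m(i,j) min(z_i, z_j). For every pair {p,q} ⊆ N with p ≠ q, the ANOVA component of f^Lo for {p,q} is f^Lo_{p,q}(z_p, z_q) = m(p,q) · ( −max(z_p, z_q) + z_p²/2 + z_q²/2 + 1/3 ) for all z_p, z_q ∈ [0,1]. -/
import Mathlib


open MeasureTheory Finset

/-- The uniform probability measure on the unit cube `[0,1]^n`. -/
noncomputable def unifCube (n : ℕ) : Measure (Fin n → ℝ) :=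
  Measure.pi fun _ => volume.restrict (Set.Icc 0 1)

/-- The Möbius transform of a set function. -/
noncomputable def mobius {n : ℕ} (ξ : Finset (Fin n) → ℝ) (S : Finset (Fin n)) : ℝ :=
  ∑ T ∈ S.powerset, (-1 : ℝ) ^ (S \ T).card * ξ T

/-- The Fourier transform of a set function. -/
noncomputable def fourierT {n : ℕ} (ξ : Finset (Fin n) → ℝ) (S : Finset (Fin n)) : ℝ :=
  (1 / 2 ^ n : ℝ) * ∑ T : Finset (Fin n), (-1 : ℝ) ^ (S ∩ T).card * ξ T

/-- The Banzhaf interaction transform of a set function. -/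
noncomputable def banzhaf {n : ℕ} (ξ : Finset (Fin n) → ℝ) (S : Finset (Fin n)) : ℝ :=
  (1 / 2 : ℝ) ^ (n - S.card) * ∑ K : Finset (Fin n), (-1 : ℝ) ^ (S \ K).card * ξ K

/-- The multilinear (Owen) extension associated with coefficients `m`. -/
noncomputable def fOw {n : ℕ} (m : Finset (Fin n) → ℝ) (x : Fin n → ℝ) : ℝ :=
  ∑ T : Finset (Fin n), m T * ∏ i ∈ T, x i

/-- A capacity: vanishes on the empty set and is monotone. -/
def Capacity {n : ℕ} (μ : Finset (Fin n) → ℝ) : Prop :=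
  μ ∅ = 0 ∧ ∀ S T : Finset (Fin n), S ⊆ T → μ S ≤ μ T

/-- The ANOVA component of `f` associated with the subset `S`. -/
noncomputable def anova {n : ℕ} (f : (Fin n → ℝ) → ℝ) (S : Finset (Fin n))
    (z : Fin n → ℝ) : ℝ :=
  ∑ T ∈ S.powerset, (-1 : ℝ) ^ (S \ T).card *
    ∫ y, f (fun i => if i ∈ T then z i else y i) ∂unifCube n

/-- The Choquet integral (Lovász extension) of a 2-additive capacity with
Möbius transform `m`. -/
noncomputable def fLo {n : ℕ} (m : Finset (Fin n) → ℝ) (z : Fin n → ℝ) : ℝ :=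
  ∑ i, m {i} * z i +
    ∑ i, ∑ j ∈ Finset.univ.filter (fun j => i < j), m {i, j} * min (z i) (z j)
section Aux

open MeasureTheory Finset

instance : IsProbabilityMeasure (volume.restrict (Set.Icc (0:ℝ) 1)) :=
  ⟨by rw [Measure.restrict_apply_univ, Real.volume_Icc]; norm_num⟩

instance (n : ℕ) : IsProbabilityMeasure (unifCube n) := by
  unfold unifCube; infer_instance

lemma ae_coord_mem (n : ℕ) (i : Fin n) :
    ∀ᵐ y ∂unifCube n, y i ∈ Set.Icc (0:ℝ) 1 := by
  rw [MeasureTheory.ae_iff]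
  have h : {y : Fin n → ℝ | ¬ y i ∈ Set.Icc (0:ℝ) 1}
      = Function.eval i ⁻¹' (Set.Icc (0:ℝ) 1)ᶜ := rfl
  rw [h]
  unfold unifCube
  apply Measure.pi_eval_preimage_null
  rw [Measure.restrict_apply measurableSet_Icc.compl]
  simp

lemma integrable_aux (n : ℕ) {f : (Fin n → ℝ) → ℝ} (hm : Measurable f) (C : ℝ)
    (h : ∀ᵐ y ∂unifCube n, ‖f y‖ ≤ C) : Integrable f (unifCube n) :=
  (integrable_const C).mono' hm.aestronglyMeasurable h

lemma integrable_eval (n : ℕ) (i : Fin n) :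
    Integrable (fun y : Fin n → ℝ => y i) (unifCube n) := by
  apply integrable_aux n (measurable_pi_apply i) 1
  filter_upwards [ae_coord_mem n i] with y hy
  rw [Real.norm_eq_abs, abs_le]
  exact ⟨by linarith [hy.1], hy.2⟩

lemma integrable_min_right (n : ℕ) (a : ℝ) (j : Fin n) :
    Integrable (fun y : Fin n → ℝ => min a (y j)) (unifCube n) := by
  apply integrable_aux n (measurable_const.min (measurable_pi_apply j)) (max |a| 1)
  filter_upwards [ae_coord_mem n j] with y hy
  rw [Real.norm_eq_abs, abs_le]
  constructor
  · apply le_min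
    · linarith [neg_abs_le a, le_max_left |a| 1]
    · linarith [hy.1, le_max_right |a| 1]
  · exact (min_le_right _ _).trans (hy.2.trans (le_max_right _ _))

lemma integrable_min_left (n : ℕ) (a : ℝ) (i : Fin n) :
    Integrable (fun y : Fin n → ℝ => min (y i) a) (unifCube n) := by
  have h := integrable_min_right n a i
  have : (fun y : Fin n → ℝ => min (y i) a) = fun y => min a (y i) :=
    funext fun y => min_comm _ _
  rw [this]; exact h

lemma integrable_min_pair (n : ℕ) (i j : Fin n) :
    Integrable (fun y : Fin n → ℝ => min (y i) (y j)) (unifCube n) := by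
  apply integrable_aux n ((measurable_pi_apply i).min (measurable_pi_apply j)) 1
  filter_upwards [ae_coord_mem n i, ae_coord_mem n j] with y h1 h2
  rw [Real.norm_eq_abs, abs_le]
  exact ⟨le_min (by linarith [h1.1]) (by linarith [h2.1]),
    (min_le_left _ _).trans h1.2⟩

lemma integrable_fLo_mix (n : ℕ) (m : Finset (Fin n) → ℝ) (z : Fin n → ℝ)
    (T : Finset (Fin n)) :
    Integrable (fun y => fLo m (fun i => if i ∈ T then z i else y i)) (unifCube n) := by
  simp only [fLo]
  apply Integrable.add
  · apply integrable_finset_sum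
    intro i _
    by_cases h : i ∈ T
    · simp only [h, if_true]; exact integrable_const _
    · simp only [h, if_false]; exact (integrable_eval n i).const_mul _
  · apply integrable_finset_sum
    intro i _
    apply integrable_finset_sum
    intro j _
    by_cases hi : i ∈ T <;> by_cases hj : j ∈ T <;>
      simp only [hi, hj, if_true, if_false]
    · exact integrable_const _
    · exact (integrable_min_right n (z i) j).const_mul _
    · exact (integrable_min_left n (z j) i).const_mul _
    · exact (integrable_min_pair n i j).const_mul _

lemma map_eval (n : ℕ) (i : Fin n) :
    (unifCube n).map (fun y => y i) = volume.restrict (Set.Icc (0:ℝ) 1) := by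
  ext s hs
  rw [Measure.map_apply (measurable_pi_apply i) hs]
  have h : (fun y : Fin n → ℝ => y i) ⁻¹' s
      = Set.pi Set.univ (Function.update (fun _ => Set.univ) i s) := Set.eval_preimage
  rw [h]
  unfold unifCube
  rw [Measure.pi_pi,
    Finset.prod_eq_single_of_mem i (Finset.mem_univ i)
      (fun b _ hb => by rw [Function.update_of_ne hb]; exact measure_univ),
    Function.update_self]

lemma map_pair (n : ℕ) (p q : Fin n) (hpq : p ≠ q) :
    (unifCube n).map (fun y => (y p, y q))
      = (volume.restrict (Set.Icc (0:ℝ) 1)).prod (volume.restrict (Set.Icc (0:ℝ) 1)) := by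
  refine (Measure.prod_eq fun s t hs ht => ?_).symm
  rw [Measure.map_apply ((measurable_pi_apply p).prodMk (measurable_pi_apply q)) (hs.prod ht)]
  have h : (fun y : Fin n → ℝ => (y p, y q)) ⁻¹' (s ×ˢ t)
      = Set.pi Set.univ
          (Function.update (Function.update (fun _ => (Set.univ : Set ℝ)) p s) q t) := by
    ext y
    simp only [Set.mem_preimage, Set.mem_prod, Set.mem_pi, Set.mem_univ, true_implies]
    constructor
    · rintro ⟨h1, h2⟩ j
      rcases eq_or_ne j q with rfl | hjq
      · simpa using h2
      · rcases eq_or_ne j p with rfl | hjp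
        · rw [Function.update_of_ne hjq, Function.update_self]; exact h1
        · rw [Function.update_of_ne hjq, Function.update_of_ne hjp]; trivial
    · intro h
      constructor
      · have := h p
        rwa [Function.update_of_ne hpq, Function.update_self] at this
      · have := h q
        rwa [Function.update_self] at this
  rw [h]
  unfold unifCube
  rw [Measure.pi_pi]
  have h1' : ∀ x ∈ Finset.univ, x ∉ ({p, q} : Finset (Fin n)) →
      (volume.restrict (Set.Icc (0:ℝ) 1))
        (Function.update (Function.update (fun _ => (Set.univ : Set ℝ)) p s) q t x) = 1 := by
    intro x _ hx
    simp only [Finset.mem_insert, Finset.mem_singleton, not_or] at hx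
    rw [Function.update_of_ne hx.2, Function.update_of_ne hx.1]
    exact measure_univ
  rw [← Finset.prod_subset (Finset.subset_univ _) h1', Finset.prod_pair hpq,
    Function.update_of_ne hpq, Function.update_self, Function.update_self]

lemma int_min_Icc (a : ℝ) (ha : a ∈ Set.Icc (0:ℝ) 1) :
    ∫ x in Set.Icc (0:ℝ) 1, min a x = a - a ^ 2 / 2 := by
  obtain ⟨ha0, ha1⟩ := ha
  rw [MeasureTheory.integral_Icc_eq_integral_Ioc,
    ← intervalIntegral.integral_of_le zero_le_one]
  have hi : ∀ u v : ℝ, IntervalIntegrable (fun x => min a x) volume u v :=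
    fun u v => (continuous_const.min continuous_id).intervalIntegrable u v
  rw [← intervalIntegral.integral_add_adjacent_intervals (hi 0 a) (hi a 1)]
  have h1 : ∫ x in (0:ℝ)..a, min a x = ∫ x in (0:ℝ)..a, x := by
    apply intervalIntegral.integral_congr
    intro x hx
    rw [Set.uIcc_of_le ha0] at hx
    exact min_eq_right hx.2
  have h2 : ∫ x in a..(1:ℝ), min a x = ∫ x in a..(1:ℝ), a := by
    apply intervalIntegral.integral_congr
    intro x hx
    rw [Set.uIcc_of_le ha1] at hx
    exact min_eq_left hx.1
  rw [h1, h2, integral_id, intervalIntegral.integral_const, smul_eq_mul]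
  ring

lemma int_aux_Icc : ∫ x in Set.Icc (0:ℝ) 1, (x - x ^ 2 / 2) = 1 / 3 := by
  rw [MeasureTheory.integral_Icc_eq_integral_Ioc,
    ← intervalIntegral.integral_of_le zero_le_one]
  have h1 : IntervalIntegrable (fun x : ℝ => x) volume 0 1 :=
    continuous_id.intervalIntegrable 0 1
  have h2 : IntervalIntegrable (fun x : ℝ => x ^ 2 / 2) volume 0 1 :=
    ((continuous_pow 2).div_const 2).intervalIntegrable 0 1
  rw [intervalIntegral.integral_sub h1 h2, integral_id]
  have h3 : ∫ x in (0:ℝ)..1, x ^ 2 / 2 = (∫ x in (0:ℝ)..1, x ^ 2) / 2 :=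
    intervalIntegral.integral_div 2 _
  rw [h3, integral_pow]
  norm_num

end Aux

section Aux2

open MeasureTheory Finset

lemma key_pointwise {n : ℕ} (m : Finset (Fin n) → ℝ) (p q : Fin n) (hpq : p < q)
    (z y : Fin n → ℝ) :
    fLo m (fun i => if i ∈ ({p, q} : Finset (Fin n)) then z i else y i)
      - fLo m (fun i => if i ∈ ({p} : Finset (Fin n)) then z i else y i)
      - fLo m (fun i => if i ∈ ({q} : Finset (Fin n)) then z i else y i)
      + fLo m (fun i => if i ∈ (∅ : Finset (Fin n)) then z i else y i)
    = m {p, q} * (min (z p) (z q) - min (z p) (y q) - min (y p) (z q)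
        + min (y p) (y q)) := by
  have hne : p ≠ q := ne_of_lt hpq
  simp only [fLo]
  have hA : (∑ i, m {i} * (if i ∈ ({p, q} : Finset (Fin n)) then z i else y i))
      - (∑ i, m {i} * (if i ∈ ({p} : Finset (Fin n)) then z i else y i))
      - (∑ i, m {i} * (if i ∈ ({q} : Finset (Fin n)) then z i else y i))
      + (∑ i, m {i} * (if i ∈ (∅ : Finset (Fin n)) then z i else y i)) = 0 := by
    rw [← Finset.sum_sub_distrib, ← Finset.sum_sub_distrib, ← Finset.sum_add_distrib]
    apply Finset.sum_eq_zero
    intro i _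
    rcases eq_or_ne i p with rfl | hip
    · simp [Finset.mem_insert, hne]
    · rcases eq_or_ne i q with rfl | hiq
      · simp [Finset.mem_insert, hne.symm]
      · simp [Finset.mem_insert, hip, hiq]
  have hB : (∑ i, ∑ j ∈ Finset.univ.filter (fun j => i < j),
        m {i, j} * min (if i ∈ ({p, q} : Finset (Fin n)) then z i else y i)
          (if j ∈ ({p, q} : Finset (Fin n)) then z j else y j))
      - (∑ i, ∑ j ∈ Finset.univ.filter (fun j => i < j),
        m {i, j} * min (if i ∈ ({p} : Finset (Fin n)) then z i else y i)
          (if j ∈ ({p} : Finset (Fin n)) then z j else y j))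
      - (∑ i, ∑ j ∈ Finset.univ.filter (fun j => i < j),
        m {i, j} * min (if i ∈ ({q} : Finset (Fin n)) then z i else y i)
          (if j ∈ ({q} : Finset (Fin n)) then z j else y j))
      + (∑ i, ∑ j ∈ Finset.univ.filter (fun j => i < j),
        m {i, j} * min (if i ∈ (∅ : Finset (Fin n)) then z i else y i)
          (if j ∈ (∅ : Finset (Fin n)) then z j else y j))
      = m {p, q} * (min (z p) (z q) - min (z p) (y q) - min (y p) (z q)
          + min (y p) (y q)) := by
    rw [← Finset.sum_sub_distrib, ← Finset.sum_sub_distrib, ← Finset.sum_add_distrib]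
    rw [Finset.sum_eq_single_of_mem p (Finset.mem_univ p)]
    · rw [← Finset.sum_sub_distrib, ← Finset.sum_sub_distrib, ← Finset.sum_add_distrib]
      rw [Finset.sum_eq_single_of_mem q (by simp [hpq])]
      · simp only [Finset.mem_insert, Finset.mem_singleton, Finset.notMem_empty,
          if_false, hne, hne.symm, or_false, false_or, or_self, if_true, if_false,
          eq_self_iff_true, true_or, or_true]
        ring
      · intro j hj hjq
        have hpj : p < j := by simpa using hj
        have hjp : j ≠ p := ne_of_gt hpj
        simp only [Finset.mem_insert, Finset.mem_singleton, Finset.notMem_empty,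
          if_false, hne, hjp, hjq, or_false, false_or, or_self, if_true,
          eq_self_iff_true, true_or]
        ring
    · intro i _ hip
      rw [← Finset.sum_sub_distrib, ← Finset.sum_sub_distrib, ← Finset.sum_add_distrib]
      apply Finset.sum_eq_zero
      intro j hj
      have hij : i < j := by simpa using hj
      by_cases hiq : i = q
      · have hjp : j ≠ p := ne_of_gt (hpq.trans (hiq ▸ hij))
        have hjq : j ≠ q := ne_of_gt (hiq ▸ hij)
        simp only [hiq, Finset.mem_insert, Finset.mem_singleton, Finset.notMem_empty,
          if_false, hne.symm, hip, hjp, hjq, or_false, false_or, or_self, if_true,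
          eq_self_iff_true, true_or, or_true]
        ring
      · rcases eq_or_ne j p with rfl | hjp
        · simp only [Finset.mem_insert, Finset.mem_singleton, Finset.notMem_empty,
            if_false, hne, hip, hiq, or_false, false_or, or_self, if_true,
            eq_self_iff_true, true_or]
          ring
        · rcases eq_or_ne j q with rfl | hjq
          · simp only [Finset.mem_insert, Finset.mem_singleton, Finset.notMem_empty,
              if_false, hne.symm, hip, hiq, hjp, or_false, false_or, or_self, if_true,
              eq_self_iff_true, true_or, or_true]
            ring
          · simp only [Finset.mem_insert, Finset.mem_singleton, Finset.notMem_empty,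
              if_false, hip, hiq, hjp, hjq, or_false, false_or, or_self, if_true]
            ring
  linarith [hA, hB]

end Aux2

section Aux3

open MeasureTheory Finset

lemma anova_fLo_pair_lt {n : ℕ} (m : Finset (Fin n) → ℝ) (p q : Fin n) (hpq : p < q)
    (z : Fin n → ℝ) (hzp : z p ∈ Set.Icc (0 : ℝ) 1) (hzq : z q ∈ Set.Icc (0 : ℝ) 1) :
    anova (fLo m) {p, q} z =
      m {p, q} * (-(max (z p) (z q)) + (z p) ^ 2 / 2 + (z q) ^ 2 / 2 + 1 / 3) := by
  have hne : p ≠ q := ne_of_lt hpq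
  -- integrability of the four mixed integrands
  have h1 := integrable_fLo_mix n m z ({p, q} : Finset (Fin n))
  have h2 := integrable_fLo_mix n m z ({p} : Finset (Fin n))
  have h3 := integrable_fLo_mix n m z ({q} : Finset (Fin n))
  have h4 := integrable_fLo_mix n m z (∅ : Finset (Fin n))
  -- marginal integral computations
  have e2 : (∫ y, min (z p) (y q) ∂unifCube n) = z p - (z p) ^ 2 / 2 := by
    have hm : AEStronglyMeasurable (fun x : ℝ => min (z p) x)
        ((unifCube n).map (fun y => y q)) :=
      (continuous_const.min continuous_id).aestronglyMeasurable
    rw [← integral_map (measurable_pi_apply q).aemeasurable hm, map_eval n q]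
    exact int_min_Icc (z p) hzp
  have e3 : (∫ y, min (y p) (z q) ∂unifCube n) = z q - (z q) ^ 2 / 2 := by
    have hc : (fun y : Fin n → ℝ => min (y p) (z q)) = fun y => min (z q) (y p) :=
      funext fun y => min_comm _ _
    rw [hc]
    have hm : AEStronglyMeasurable (fun x : ℝ => min (z q) x)
        ((unifCube n).map (fun y => y p)) :=
      (continuous_const.min continuous_id).aestronglyMeasurable
    rw [← integral_map (measurable_pi_apply p).aemeasurable hm, map_eval n p]
    exact int_min_Icc (z q) hzq
  have e4 : (∫ y, min (y p) (y q) ∂unifCube n) = 1 / 3 := by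
    have hmeas : Measurable (fun y : Fin n → ℝ => (y p, y q)) :=
      (measurable_pi_apply p).prodMk (measurable_pi_apply q)
    have hcont : Continuous (fun r : ℝ × ℝ => min r.1 r.2) :=
      continuous_fst.min continuous_snd
    have hint : Integrable (fun r : ℝ × ℝ => min r.1 r.2)
        ((volume.restrict (Set.Icc (0:ℝ) 1)).prod (volume.restrict (Set.Icc (0:ℝ) 1))) := by
      rw [Measure.prod_restrict, ← Measure.volume_eq_prod]
      exact hcont.continuousOn.integrableOn_compact (isCompact_Icc.prod isCompact_Icc)
    have hthis := integral_map (μ := unifCube n)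
      (φ := fun y : Fin n → ℝ => (y p, y q)) hmeas.aemeasurable
      (f := fun r : ℝ × ℝ => min r.1 r.2) hcont.aestronglyMeasurable
    rw [map_pair n p q hne] at hthis
    simp only at hthis
    rw [← hthis, integral_prod _ hint]
    have hcongr : ∫ a in Set.Icc (0:ℝ) 1, (∫ b in Set.Icc (0:ℝ) 1, min a b)
        = ∫ a in Set.Icc (0:ℝ) 1, (a - a ^ 2 / 2) :=
      setIntegral_congr_fun measurableSet_Icc fun a ha => int_min_Icc a ha
    rw [hcongr, int_aux_Icc]
  have econst : (∫ _ : Fin n → ℝ, min (z p) (z q) ∂unifCube n) = min (z p) (z q) := by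
    simp [integral_const]
  -- the key combined integral identity
  have key : (∫ y, fLo m (fun i => if i ∈ ({p, q} : Finset (Fin n)) then z i else y i) ∂unifCube n)
      - (∫ y, fLo m (fun i => if i ∈ ({p} : Finset (Fin n)) then z i else y i) ∂unifCube n)
      - (∫ y, fLo m (fun i => if i ∈ ({q} : Finset (Fin n)) then z i else y i) ∂unifCube n)
      + (∫ y, fLo m (fun i => if i ∈ (∅ : Finset (Fin n)) then z i else y i) ∂unifCube n)
      = m {p, q} * (min (z p) (z q) - (z p - (z p) ^ 2 / 2) - (z q - (z q) ^ 2 / 2) + 1 / 3) := by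
    have h12 : Integrable (fun y : Fin n → ℝ =>
        fLo m (fun i => if i ∈ ({p, q} : Finset (Fin n)) then z i else y i)
        - fLo m (fun i => if i ∈ ({p} : Finset (Fin n)) then z i else y i))
        (unifCube n) := h1.sub h2
    have h123 : Integrable (fun y : Fin n → ℝ =>
        fLo m (fun i => if i ∈ ({p, q} : Finset (Fin n)) then z i else y i)
        - fLo m (fun i => if i ∈ ({p} : Finset (Fin n)) then z i else y i)
        - fLo m (fun i => if i ∈ ({q} : Finset (Fin n)) then z i else y i))
        (unifCube n) := h12.sub h3
    rw [← integral_sub h1 h2, ← integral_sub h12 h3, ← integral_add h123 h4]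
    have hfun : (fun y : Fin n → ℝ =>
        fLo m (fun i => if i ∈ ({p, q} : Finset (Fin n)) then z i else y i)
        - fLo m (fun i => if i ∈ ({p} : Finset (Fin n)) then z i else y i)
        - fLo m (fun i => if i ∈ ({q} : Finset (Fin n)) then z i else y i)
        + fLo m (fun i => if i ∈ (∅ : Finset (Fin n)) then z i else y i))
        = fun y => m {p, q} * (min (z p) (z q) - min (z p) (y q) - min (y p) (z q)
            + min (y p) (y q)) :=
      funext fun y => key_pointwise m p q hpq z y
    rw [hfun, integral_const_mul]
    have ic : Integrable (fun _ : Fin n → ℝ => min (z p) (z q)) (unifCube n) :=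
      integrable_const _
    have ib := integrable_min_right n (z p) q
    have ic2 := integrable_min_left n (z q) p
    have id2 := integrable_min_pair n p q
    have j1 : Integrable (fun y : Fin n → ℝ => min (z p) (z q) - min (z p) (y q))
        (unifCube n) := ic.sub ib
    have j2 : Integrable (fun y : Fin n → ℝ =>
        min (z p) (z q) - min (z p) (y q) - min (y p) (z q)) (unifCube n) := j1.sub ic2
    rw [integral_add j2 id2, integral_sub j1 ic2, integral_sub ic ib, econst, e2, e3, e4]
  -- expand anova into the four signed integrals
  unfold anova
  rw [show ({p, q} : Finset (Fin n)) = insert p {q} from rfl,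
    Finset.sum_powerset_insert (by simp [hne])]
  have hpows : ({q} : Finset (Fin n)).powerset = {∅, {q}} := by
    ext T
    simp [Finset.mem_powerset, Finset.subset_singleton_iff]
  have hnm : (∅ : Finset (Fin n)) ∉ ({{q}} : Finset (Finset (Fin n))) := by
    simp only [Finset.mem_singleton]
    exact (Finset.singleton_ne_empty q).symm
  rw [hpows, Finset.sum_insert hnm, Finset.sum_singleton,
    Finset.sum_insert hnm, Finset.sum_singleton]
  have c1 : ((insert p {q} : Finset (Fin n)) \ ∅).card = 2 := by
    rw [Finset.sdiff_empty]; exact Finset.card_pair hne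
  have c2 : ((insert p {q} : Finset (Fin n)) \ {q}).card = 1 := by
    rw [Finset.card_sdiff_of_subset (by simp), Finset.card_pair hne, Finset.card_singleton]
  have c3 : ((insert p {q} : Finset (Fin n)) \ insert p ∅).card = 1 := by
    rw [show (insert p ∅ : Finset (Fin n)) = {p} by simp,
      Finset.card_sdiff_of_subset (by simp), Finset.card_pair hne, Finset.card_singleton]
  have c4 : ((insert p {q} : Finset (Fin n)) \ insert p {q}).card = 0 := by
    rw [Finset.sdiff_self]; rfl
  rw [c1, c2, c3, c4]
  have hins : (insert p (∅ : Finset (Fin n))) = {p} := by simp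
  rw [hins, show ((-1:ℝ)) ^ (2:ℕ) = 1 by norm_num, show ((-1:ℝ)) ^ (1:ℕ) = -1 by norm_num,
    show ((-1:ℝ)) ^ (0:ℕ) = 1 by norm_num]
  -- now the goal is a linear rearrangement of `key`
  have hmm : min (z p) (z q) = z p + z q - max (z p) (z q) := by
    rw [← min_add_max (z p) (z q)]; ring
  rw [hmm] at key
  linarith [key]

end Aux3

/-- Theorem 2 (pair ANOVA component) for the Choquet integral of a 2-additive
capacity. -/
theorem anova_fLo_pair (n : ℕ) (μ : Finset (Fin n) → ℝ) (hμ : Capacity μ)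
    (h2 : ∀ T : Finset (Fin n), 2 < T.card → mobius μ T = 0)
    (p q : Fin n) (hpq : p ≠ q) (z : Fin n → ℝ)
    (hzp : z p ∈ Set.Icc (0 : ℝ) 1) (hzq : z q ∈ Set.Icc (0 : ℝ) 1) :
    anova (fLo (mobius μ)) {p, q} z =
      mobius μ {p, q} *
        (-(max (z p) (z q)) + (z p) ^ 2 / 2 + (z q) ^ 2 / 2 + 1 / 3) := by
  rcases lt_or_gt_of_ne hpq with h | h
  · exact anova_fLo_pair_lt (mobius μ) p q h z hzp hzq
  · rw [Finset.pair_comm p q, anova_fLo_pair_lt (mobius μ) q p h z hzq hzp,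
      max_comm (z q) (z p)]
    ring
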